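/- arXiv:0801.2227 — 2 statements merged into one kernel-verified Lean document; each statement's English description precedes it below -/
import Mathlib

section
/- Let k ≥ 1 and φ(r) = ∑_{j=0}^{k} r^{2j+1}/(2j+1)!. Then for all r > 0, φ'(r)·((φ'(r))² − φ(r)φ''(r)) > 1. -/
noncomputable def phi (k : ℕ) (r : ℝ) : ℝ :=
  ∑ j ∈ Finset.range (k + 1), r ^ (2 * j + 1) / (Nat.factorial (2 * j + 1) : ℝ)

/-!
Let `ψ_k = φ_k'` be the truncated `cosh` series, so that `φ_k'' = φ_{k-1}`. The function
`W = ψ_k ^ 2 - φ_k φ_{k-1}` equals `1` at `0`, and `W' = ψ_k φ_{k-1} - φ_k ψ_{k-1}`. Once the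
common partial sums cancel, `W'` compares the top terms of `ψ_k`, `φ_k` against the terms of
`φ_{k-1}`, `ψ_{k-1}`, and a termwise factorial inequality makes it positive for `r > 0`. Hence
`W > 1` there, and with `ψ_k > 1` this gives `ψ_k W > 1`.
-/

open Finset
open scoped Nat

noncomputable def coshPartial (k : ℕ) (r : ℝ) : ℝ :=
  ∑ j ∈ range (k + 1), r ^ (2 * j) / ((2 * j)! : ℝ)

lemma factorial_mul_factorial_succ_lt {i n : ℕ} (h : i < n) :
    n ! * (i + 1)! < (n + 1)! * i ! := by
  rw [Nat.factorial_succ, Nat.factorial_succ]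
  have := n.factorial_pos
  have := i.factorial_pos
  calc n ! * ((i + 1) * i !) = (i + 1) * (n ! * i !) := by ring
    _ < (n + 1) * (n ! * i !) := by gcongr
    _ = (n + 1) * n ! * i ! := by ring

lemma pow_div_factorial_succ_mul_lt {i n : ℕ} (h : i < n) {r : ℝ} (hr : 0 < r) :
    r ^ (n + 1) / ((n + 1)! : ℝ) * (r ^ i / (i ! : ℝ))
      < r ^ n / (n ! : ℝ) * (r ^ (i + 1) / ((i + 1)! : ℝ)) := by
  rw [div_mul_div_comm, div_mul_div_comm, ← pow_add, ← pow_add,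
    show n + 1 + i = n + (i + 1) by ring]
  have hfac : ((n ! * (i + 1)! : ℕ) : ℝ) < ((n + 1)! * i ! : ℕ) := by
    exact_mod_cast factorial_mul_factorial_succ_lt h
  push_cast at hfac
  exact div_lt_div_of_pos_left (by positivity) (by positivity) hfac

lemma hasDerivAt_phi (k : ℕ) (r : ℝ) : HasDerivAt (phi k) (coshPartial k r) r := by
  refine HasDerivAt.fun_sum fun j _ => ?_
  refine ((hasDerivAt_pow (2 * j + 1) r).div_const _).congr_deriv ?_
  rw [Nat.factorial_succ, Nat.add_sub_cancel]
  have : ((2 * j)! : ℝ) ≠ 0 := by positivity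
  push_cast
  field_simp

lemma hasDerivAt_coshPartial_succ (m : ℕ) (r : ℝ) :
    HasDerivAt (coshPartial (m + 1)) (phi m r) r := by
  refine (HasDerivAt.fun_sum fun j _ => (hasDerivAt_pow (2 * j) r).div_const _).congr_deriv ?_
  rw [sum_range_succ']
  simp only [Nat.mul_zero, Nat.cast_zero, zero_mul, zero_div, add_zero]
  refine sum_congr rfl fun i _ => ?_
  rw [show 2 * (i + 1) = 2 * i + 1 + 1 by ring, Nat.factorial_succ, Nat.add_sub_cancel]
  have : ((2 * i + 1)! : ℝ) ≠ 0 := by positivity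
  push_cast
  field_simp

lemma deriv_phi (k : ℕ) : deriv (phi k) = coshPartial k :=
  funext fun r => (hasDerivAt_phi k r).deriv

lemma phi_apply_zero (k : ℕ) : phi k 0 = 0 :=
  sum_eq_zero fun j _ => by simp

lemma coshPartial_apply_zero (k : ℕ) : coshPartial k 0 = 1 := by
  simp [coshPartial, sum_range_succ']

lemma one_lt_coshPartial_succ (m : ℕ) {r : ℝ} (hr : 0 < r) : 1 < coshPartial (m + 1) r := by
  rw [coshPartial, sum_range_succ']
  have : 0 < ∑ j ∈ range (m + 1), r ^ (2 * (j + 1)) / ((2 * (j + 1))! : ℝ) :=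
    sum_pos (fun j _ => by positivity) nonempty_range_add_one
  simpa using this

lemma phi_succ (m : ℕ) (r : ℝ) :
    phi (m + 1) r = phi m r + r ^ (2 * (m + 1) + 1) / ((2 * (m + 1) + 1)! : ℝ) :=
  sum_range_succ _ _

lemma coshPartial_succ (m : ℕ) (r : ℝ) :
    coshPartial (m + 1) r = coshPartial m r + r ^ (2 * (m + 1)) / ((2 * (m + 1))! : ℝ) :=
  sum_range_succ _ _

lemma phi_mul_coshPartial_lt (m : ℕ) {r : ℝ} (hr : 0 < r) :
    phi (m + 1) r * coshPartial m r < coshPartial (m + 1) r * phi m r := by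
  suffices r ^ (2 * (m + 1) + 1) / ((2 * (m + 1) + 1)! : ℝ) * coshPartial m r
      < r ^ (2 * (m + 1)) / ((2 * (m + 1))! : ℝ) * phi m r by
    rw [phi_succ, coshPartial_succ]
    linarith
  rw [coshPartial, phi, mul_sum, mul_sum]
  refine sum_lt_sum_of_nonempty nonempty_range_add_one fun j hj => ?_
  exact pow_div_factorial_succ_mul_lt (by have := mem_range.mp hj; omega) hr

lemma one_lt_coshPartial_sq_sub_phi_mul_phi (m : ℕ) {r : ℝ} (hr : 0 < r) :
    1 < coshPartial (m + 1) r ^ 2 - phi (m + 1) r * phi m r := by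
  set W : ℝ → ℝ := fun x => coshPartial (m + 1) x ^ 2 - phi (m + 1) x * phi m x
  have hW : ∀ x, HasDerivAt W
      (coshPartial (m + 1) x * phi m x - phi (m + 1) x * coshPartial m x) x :=
    fun x => (((hasDerivAt_coshPartial_succ m x).pow 2).sub
      ((hasDerivAt_phi (m + 1) x).mul (hasDerivAt_phi m x))).congr_deriv (by ring)
  have hmono : StrictMonoOn W (Set.Ici 0) := by
    refine strictMonoOn_of_deriv_pos (convex_Ici 0)
      (fun x _ => (hW x).continuousAt.continuousWithinAt) fun x hx => ?_
    rw [interior_Ici] at hx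
    rw [(hW x).deriv, sub_pos]
    exact phi_mul_coshPartial_lt m hx
  have hW0 : W 0 = 1 := by simp [W, phi_apply_zero, coshPartial_apply_zero]
  simpa [hW0] using hmono Set.self_mem_Ici hr.le hr

theorem stmt_1 (k : ℕ) (hk : 1 ≤ k) :
    ∀ r : ℝ, 0 < r →
      1 < deriv (phi k) r * ((deriv (phi k) r) ^ 2 - phi k r * deriv (deriv (phi k)) r) := by
  obtain ⟨m, rfl⟩ : ∃ m, k = m + 1 := ⟨k - 1, by omega⟩
  intro r hr
  rw [deriv_phi, (hasDerivAt_coshPartial_succ m r).deriv]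
  exact one_lt_mul_of_lt_of_le (one_lt_coshPartial_succ m hr)
    (one_lt_coshPartial_sq_sub_phi_mul_phi m hr).le
end

section
/- Let k ≥ 1 and φ(r) = ∑_{j=0}^{k} r^{2j+1}/(2j+1)!. Then the function r ↦ (φ'(r))² − φ(r)φ''(r) is strictly increasing on (0,∞), and (φ'(r))² − φ(r)φ''(r) > 1 for all r > 0. -/
/-!
Write `S n` and `C n` for the partial sums of the first `n` terms of the series of `sinh` and
`cosh`, so that `φ = S (k+1)`, `φ' = C (k+1)`, `φ'' = S k` and `φ''' = C k`. The function
`W = φ'² - φφ''` has derivative `φ'φ'' - φφ''' = C (k+1) S k - S (k+1) C k`; after cancelling,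
this is `∑_{j<k} (a_{2k} a_{2j+1} - a_{2k+1} a_{2j})` with `a_n = rⁿ/n!`, and each summand is
positive because `a_{n+1}/a_n = r/(n+1)` decreases in `n`. Hence `W` increases strictly on
`[0, ∞)`, starting from `W 0 = 1`.
-/

open Finset

noncomputable def sinhPartialSum (n : ℕ) (r : ℝ) : ℝ :=
  ∑ j ∈ range n, r ^ (2 * j + 1) / (2 * j + 1).factorial

noncomputable def coshPartialSum (n : ℕ) (r : ℝ) : ℝ :=
  ∑ j ∈ range n, r ^ (2 * j) / (2 * j).factorial

lemma hasDerivAt_pow_succ_div_factorial (m : ℕ) (r : ℝ) :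
    HasDerivAt (fun x : ℝ => x ^ (m + 1) / (m + 1).factorial) (r ^ m / m.factorial) r := by
  refine ((hasDerivAt_pow (m + 1) r).div_const ((m + 1).factorial : ℝ)).congr_deriv ?_
  rw [Nat.factorial_succ, Nat.cast_mul, Nat.add_sub_cancel]
  field_simp

lemma pow_succ_div_factorial_mul_lt {r : ℝ} (hr : 0 < r) {m n : ℕ} (hmn : m < n) :
    r ^ (n + 1) / (n + 1).factorial * (r ^ m / m.factorial)
      < r ^ n / n.factorial * (r ^ (m + 1) / (m + 1).factorial) := by
  have hstep (p : ℕ) : r ^ (p + 1) / (p + 1).factorial = r ^ p / p.factorial * (r / (p + 1)) := by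
    rw [pow_succ, Nat.factorial_succ]
    push_cast
    field_simp
  rw [hstep, hstep, mul_right_comm, mul_assoc]
  gcongr

lemma hasDerivAt_sinhPartialSum (n : ℕ) (r : ℝ) :
    HasDerivAt (sinhPartialSum n) (coshPartialSum n r) r := by
  unfold sinhPartialSum coshPartialSum
  exact HasDerivAt.fun_sum fun j _ => hasDerivAt_pow_succ_div_factorial (2 * j) r

lemma hasDerivAt_coshPartialSum_succ (n : ℕ) (r : ℝ) :
    HasDerivAt (coshPartialSum (n + 1)) (sinhPartialSum n r) r := by
  have hsplit : coshPartialSum (n + 1) = fun x : ℝ =>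
      ∑ j ∈ range n, x ^ (2 * j + 1 + 1) / (2 * j + 1 + 1).factorial + 1 := by
    ext x
    simp [coshPartialSum, sum_range_succ', mul_add]
  rw [hsplit]
  exact (HasDerivAt.fun_sum fun j _ => hasDerivAt_pow_succ_div_factorial (2 * j + 1) r).add_const 1

lemma sinhPartialSum_zero_right (n : ℕ) : sinhPartialSum n 0 = 0 := by
  simp [sinhPartialSum]

lemma coshPartialSum_succ_zero_right (n : ℕ) : coshPartialSum (n + 1) 0 = 1 := by
  simp [coshPartialSum, sum_range_succ']

lemma coshPartialSum_succ_mul_sub_pos {n : ℕ} (hn : 0 < n) {r : ℝ} (hr : 0 < r) :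
    0 < coshPartialSum (n + 1) r * sinhPartialSum n r
      - sinhPartialSum (n + 1) r * coshPartialSum n r := by
  have hcancel : coshPartialSum (n + 1) r * sinhPartialSum n r
      - sinhPartialSum (n + 1) r * coshPartialSum n r
      = ∑ j ∈ range n, (r ^ (2 * n) / (2 * n).factorial * (r ^ (2 * j + 1) / (2 * j + 1).factorial)
          - r ^ (2 * n + 1) / (2 * n + 1).factorial * (r ^ (2 * j) / (2 * j).factorial)) := by
    simp only [coshPartialSum, sinhPartialSum, sum_range_succ, sum_sub_distrib, ← mul_sum]
    ring
  rw [hcancel]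
  refine sum_pos (fun j hj => sub_pos.mpr ?_) (nonempty_range_iff.mpr hn.ne')
  exact pow_succ_div_factorial_mul_lt hr (by have := mem_range.mp hj; omega)

lemma hasDerivAt_sq_sub_mul {𝕜 : Type*} [NontriviallyNormedField 𝕜]
    {f f₁ f₂ f₃ : 𝕜 → 𝕜} {x : 𝕜} (hf : HasDerivAt f (f₁ x) x) (hf₁ : HasDerivAt f₁ (f₂ x) x)
    (hf₂ : HasDerivAt f₂ (f₃ x) x) :
    HasDerivAt (fun y => f₁ y ^ 2 - f y * f₂ y) (f₁ x * f₂ x - f x * f₃ x) x := by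
  refine ((hf₁.pow 2).sub (hf.mul hf₂)).congr_deriv ?_
  ring

theorem stmt_2 (k : ℕ) (hk : 1 ≤ k) :
    StrictMonoOn (fun r : ℝ => (deriv (phi k) r) ^ 2 - phi k r * deriv (deriv (phi k)) r)
        (Set.Ioi (0 : ℝ))
      ∧ ∀ r : ℝ, 0 < r →
          1 < (deriv (phi k) r) ^ 2 - phi k r * deriv (deriv (phi k)) r := by
  have hphi : phi k = sinhPartialSum (k + 1) := rfl
  have hd1 : deriv (phi k) = coshPartialSum (k + 1) :=
    funext fun r => (hasDerivAt_sinhPartialSum (k + 1) r).deriv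
  have hd2 : deriv (coshPartialSum (k + 1)) = sinhPartialSum k :=
    funext fun r => (hasDerivAt_coshPartialSum_succ k r).deriv
  rw [hd1, hd2, hphi]
  set W := fun r => coshPartialSum (k + 1) r ^ 2 - sinhPartialSum (k + 1) r * sinhPartialSum k r
  have hW_deriv (r : ℝ) := hasDerivAt_sq_sub_mul (hasDerivAt_sinhPartialSum (k + 1) r)
    (hasDerivAt_coshPartialSum_succ k r) (hasDerivAt_sinhPartialSum k r)
  have hmono : StrictMonoOn W (Set.Ici 0) := by
    refine strictMonoOn_of_hasDerivWithinAt_pos (convex_Ici 0)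
      (fun r _ => (hW_deriv r).continuousAt.continuousWithinAt)
      (fun r _ => (hW_deriv r).hasDerivWithinAt)
      fun r hr => coshPartialSum_succ_mul_sub_pos hk ?_
    simpa using hr
  have hW0 : W 0 = 1 := by
    simp [W, sinhPartialSum_zero_right, coshPartialSum_succ_zero_right]
  refine ⟨hmono.mono Set.Ioi_subset_Ici_self, fun r hr => ?_⟩
  simpa [hW0] using hmono Set.self_mem_Ici hr.le hr
end
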